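/- The equality operator =_S built from S_e is transitive with respect to the product t-norm whenever the middle parameter does not exceed the larger outer parameter: for all reals x, y, z and parameters p_x, p_y, p_z > 0 with p_y ≤ max(p_x, p_z), one has (x_{S_e(p_x)} =_S y_{S_e(p_y)}) · (y_{S_e(p_y)} =_S z_{S_e(p_z)}) ≤ (x_{S_e(p_x)} =_S z_{S_e(p_z)}). -/

import Mathlib

/-! `S_e(p)` grows with `p`, and `h` gives `max(p_x, p_y), max(p_y, p_z) ≤ max(p_x, p_z) =: M`, so the
left side is at most `S_e(M)(x,y) · S_e(M)(y,z)`. Since `S_e(M) = exp(-d)` for the metric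
`d(x,y) = |x - y| / M`, this product is `exp(-(d(x,y) + d(y,z))) ≤ exp(-d(x,z))`. -/

/-- The relation `S_e(p)(x,y) = exp(-|x - y|/p)`. -/
noncomputable def Se (p x y : ℝ) : ℝ := Real.exp (-(|x - y| / p))

/-- The equality operator for extensional fuzzy numbers built from `S_e`. -/
noncomputable def eqSe (px py x y : ℝ) : ℝ := Se (max px py) x y

lemma Se_pos (p x y : ℝ) : 0 < Se p x y := Real.exp_pos _

lemma Se_le_Se_of_le {p q : ℝ} (hq : 0 < q) (hqp : q ≤ p) (x y : ℝ) : Se q x y ≤ Se p x y :=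
  Real.exp_le_exp.mpr <| neg_le_neg <| div_le_div_of_nonneg_left (abs_nonneg _) hq hqp

lemma Se_mul_Se_le {p : ℝ} (hp : 0 ≤ p) (x y z : ℝ) : Se p x y * Se p y z ≤ Se p x z := by
  have triangle : |x - z| / p ≤ |x - y| / p + |y - z| / p := by
    rw [← add_div]
    exact div_le_div_of_nonneg_right (abs_sub_le x y z) hp
  unfold Se
  rw [← Real.exp_add, Real.exp_le_exp]
  linarith

theorem eqSe_transitive_general (x y z px py pz : ℝ)
    (hpx : 0 < px) (hpz : 0 < pz) (h : py ≤ max px pz) :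
    eqSe px py x y * eqSe py pz y z ≤ eqSe px pz x z := by
  have hM : 0 ≤ max px pz := hpx.le.trans (le_max_left _ _)
  have hxy : Se (max px py) x y ≤ Se (max px pz) x y :=
    Se_le_Se_of_le (hpx.trans_le (le_max_left _ _)) (max_le (le_max_left _ _) h) x y
  have hyz : Se (max py pz) y z ≤ Se (max px pz) y z :=
    Se_le_Se_of_le (hpz.trans_le (le_max_right _ _)) (max_le h (le_max_right _ _)) y z
  calc eqSe px py x y * eqSe py pz y z ≤ Se (max px pz) x y * Se (max px pz) y z :=
        mul_le_mul hxy hyz (Se_pos _ _ _).le (Se_pos _ _ _).le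
    _ ≤ eqSe px pz x z := Se_mul_Se_le hM x y z

theorem eqSe_transitive (x y z px py pz : ℝ)
    (hpx : 0 < px) (hpy : 0 < py) (hpz : 0 < pz) (h : py ≤ max px pz) :
    eqSe px py x y * eqSe py pz y z ≤ eqSe px pz x z :=
  eqSe_transitive_general x y z px py pz hpx hpz h
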